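/- arXiv:2007.02008 — 3 statements merged into one kernel-verified Lean document; each statement's English description precedes it below -/
import Mathlib

section
/- Let G be a nonempty finite simple graph and X a nonnegative unit eigenvector of Q(G) corresponding to q(G), with coordinates x_v. Suppose u1u2 ∈ E(G), v1v2 ∉ E(G), v1 ≠ v2, x_{v1} + x_{v2} ≥ x_{u1} + x_{u2}, and x_{v1} + x_{v2} > 0. Then q(G − u1u2 + v1v2) > q(G). -/
open Matrix SimpleGraph

/-!
Writing `b_e` for the incidence vector of an edge `e`, `Q(G) = ∑_{e ∈ E(G)} b_e b_eᵀ`. Hence for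
`H = G − u₁u₂ + v₁v₂` we get `Q(H) = Q(G) + b_v b_vᵀ − b_u b_uᵀ`, and the Rayleigh quotient gives
`q(H) ≥ Xᵀ Q(H) X = q(G) + (x_{v₁} + x_{v₂})² − (x_{u₁} + x_{u₂})² ≥ q(G)`. If `q(H) = q(G)`,
then `X` attains the top of the spectrum of `Q(H)`, so `Q(H) X = q(G) X = Q(G) X`, i.e.
`(x_{v₁} + x_{v₂}) b_v = (x_{u₁} + x_{u₂}) b_u`; as `x_{v₁} + x_{v₂} > 0` this forces `v = u`,
contradicting `u₁u₂ ∈ E(G)`, `v₁v₂ ∉ E(G)`.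
-/

/-- The signless Laplacian matrix `Q(G) = D(G) + A(G)` of a finite simple graph. -/
noncomputable def signlessLaplacian {V : Type*} [Fintype V] (G : SimpleGraph V) :
    Matrix V V ℝ :=
  letI := Classical.decEq V
  letI : DecidableRel G.Adj := Classical.decRel _
  Matrix.diagonal (fun v => (G.degree v : ℝ)) + G.adjMatrix ℝ

/-- The `Q`-spectral radius `q(G)`: the largest eigenvalue of `Q(G)`. -/
noncomputable def qspec {V : Type*} [Fintype V] (G : SimpleGraph V) : ℝ :=
  letI := Classical.decEq V
  sSup (spectrum ℝ (signlessLaplacian G))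

namespace Matrix

variable {n : Type*} [Fintype n]

theorem vecMulVec_self_mulVec {R : Type*} [CommSemiring R] (w x : n → R) :
    vecMulVec w w *ᵥ x = (w ⬝ᵥ x) • w := by
  rw [vecMulVec_mulVec, op_smul_eq_smul]

variable [DecidableEq n]

theorem le_sSup_spectrum (A : Matrix n n ℝ) : ∀ μ ∈ spectrum ℝ A, μ ≤ sSup (spectrum ℝ A) :=
  fun _ hμ => le_csSup A.finite_real_spectrum.bddAbove hμ

variable {A : Matrix n n ℝ}

theorem IsHermitian.posSemidef_smul_one_sub (hA : A.IsHermitian) {c : ℝ}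
    (hc : ∀ μ ∈ spectrum ℝ A, μ ≤ c) : (c • 1 - A).PosSemidef := by
  rw [← Algebra.algebraMap_eq_smul_one]
  have hC : (algebraMap ℝ (Matrix n n ℝ) c - A).IsHermitian := by
    rw [algebraMap_eq_diagonal]
    exact (isHermitian_diagonal _).sub hA
  refine hC.posSemidef_iff_eigenvalues_nonneg.2 fun i => ?_
  obtain ⟨_, rfl, μ, hμ, hμi⟩ := Set.mem_sub.1
    ((spectrum.singleton_sub_eq A c).symm ▸ hC.eigenvalues_mem_spectrum_real i)
  rw [← hμi]
  exact sub_nonneg.2 (hc μ hμ)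

theorem IsHermitian.dotProduct_mulVec_le (hA : A.IsHermitian) {c : ℝ}
    (hc : ∀ μ ∈ spectrum ℝ A, μ ≤ c) {x : n → ℝ} (hx : x ⬝ᵥ x = 1) :
    x ⬝ᵥ A *ᵥ x ≤ c := by
  have h := (hA.posSemidef_smul_one_sub hc).dotProduct_mulVec_nonneg x
  rw [star_trivial, sub_mulVec, smul_mulVec, one_mulVec, dotProduct_sub, dotProduct_smul, hx,
    smul_eq_mul, mul_one, sub_nonneg] at h
  exact h

theorem IsHermitian.mulVec_eq_smul_of_dotProduct_mulVec_eq (hA : A.IsHermitian) {c : ℝ}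
    (hc : ∀ μ ∈ spectrum ℝ A, μ ≤ c) {x : n → ℝ} (hx : x ⬝ᵥ x = 1)
    (hxc : x ⬝ᵥ A *ᵥ x = c) : A *ᵥ x = c • x := by
  have h := (hA.posSemidef_smul_one_sub hc).dotProduct_mulVec_zero_iff x
  rw [star_trivial, sub_mulVec, smul_mulVec, one_mulVec, dotProduct_sub, dotProduct_smul, hx,
    hxc, smul_eq_mul, mul_one, sub_self, sub_eq_zero] at h
  exact (h.1 rfl).symm

end Matrix

section IncidenceVector

variable {V : Type*} [DecidableEq V]

def incidenceVector (e : Sym2 V) (a : V) : ℝ := if a ∈ e then 1 else 0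

theorem incidenceVector_mk {p q : V} (hpq : p ≠ q) :
    incidenceVector s(p, q) = Pi.single p 1 + Pi.single q 1 := by
  ext a
  by_cases hp : a = p <;> by_cases hq : a = q <;> simp_all [incidenceVector]

theorem incidenceVector_mk_dotProduct [Fintype V] {p q : V} (hpq : p ≠ q) (x : V → ℝ) :
    incidenceVector s(p, q) ⬝ᵥ x = x p + x q := by
  simp [incidenceVector_mk hpq, add_dotProduct]

theorem eq_of_smul_incidenceVector_eq {p q : V} (hpq : p ≠ q) {e : Sym2 V} {a b : ℝ}
    (ha : a ≠ 0) (h : a • incidenceVector s(p, q) = b • incidenceVector e) : e = s(p, q) := by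
  have hmem : ∀ r ∈ s(p, q), r ∈ e := fun r hr => by
    by_contra hre
    simpa [incidenceVector, hr, hre, ha] using congrFun h r
  exact (Sym2.mem_and_mem_iff hpq).1
    ⟨hmem p (Sym2.mem_mk_left p q), hmem q (Sym2.mem_mk_right p q)⟩

end IncidenceVector

section SignlessLaplacian

variable {V : Type*} [Fintype V]

theorem signlessLaplacian_eq_incMatrix_mul_transpose [DecidableEq V] (G : SimpleGraph V)
    [DecidableRel G.Adj] : signlessLaplacian G = G.incMatrix ℝ * (G.incMatrix ℝ)ᵀ := by
  rw [incMatrix_mul_transpose]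
  ext a b
  unfold signlessLaplacian
  by_cases h : a = b
  · subst h
    simp only [Matrix.add_apply, diagonal_apply_eq, adjMatrix_apply, SimpleGraph.irrefl,
      ↓reduceIte, add_zero, of_apply, Nat.cast_inj]
    -- the two degrees are computed from different decidability instances
    congr!
  · simp [h]

theorem isHermitian_signlessLaplacian (G : SimpleGraph V) : (signlessLaplacian G).IsHermitian := by
  classical
  rw [signlessLaplacian_eq_incMatrix_mul_transpose, ← conjTranspose_eq_transpose_of_trivial]
  exact isHermitian_mul_conjTranspose_self _

theorem signlessLaplacian_eq_sum_edgeFinset [DecidableEq V] (G : SimpleGraph V)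
    [Fintype G.edgeSet] :
    signlessLaplacian G =
      ∑ e ∈ G.edgeFinset, vecMulVec (incidenceVector e) (incidenceVector e) := by
  classical
  ext a b
  rw [signlessLaplacian_eq_incMatrix_mul_transpose, mul_apply, Matrix.sum_apply,
    ← Finset.sum_subset (Finset.subset_univ G.edgeFinset)]
  · refine Finset.sum_congr rfl fun e he => ?_
    simp_all [incMatrix_apply', incidenceVector, incidenceSet, vecMulVec_apply]
  · intro e _ he
    simp_all [incMatrix_apply', incidenceSet]

theorem signlessLaplacian_fromEdgeSet_sdiff_union [DecidableEq V] (G : SimpleGraph V)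
    {u v : Sym2 V} (hu : u ∈ G.edgeSet) (hv : v ∉ G.edgeSet) (hv_diag : ¬ v.IsDiag) :
    signlessLaplacian (fromEdgeSet (G.edgeSet \ {u} ∪ {v})) =
      signlessLaplacian G + vecMulVec (incidenceVector v) (incidenceVector v) -
        vecMulVec (incidenceVector u) (incidenceVector u) := by
  classical
  have hedges : (fromEdgeSet (G.edgeSet \ {u} ∪ {v})).edgeFinset =
      insert v (G.edgeFinset.erase u) := by
    ext e
    by_cases he : e = v
    · subst he; simp [hv_diag]
    · simpa [he, and_comm] using fun _ => G.not_isDiag_of_mem_edgeSet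
  rw [signlessLaplacian_eq_sum_edgeFinset, signlessLaplacian_eq_sum_edgeFinset, hedges,
    Finset.sum_insert (by simp [hv]), Finset.sum_erase_eq_sub (by simpa using hu)]
  abel

theorem dotProduct_signlessLaplacian_mulVec_le_qspec (G : SimpleGraph V) {x : V → ℝ}
    (hx : x ⬝ᵥ x = 1) : x ⬝ᵥ signlessLaplacian G *ᵥ x ≤ qspec G := by
  classical
  exact (isHermitian_signlessLaplacian G).dotProduct_mulVec_le (le_sSup_spectrum _) hx

theorem signlessLaplacian_mulVec_eq_of_dotProduct_eq_qspec (G : SimpleGraph V) {x : V → ℝ}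
    (hx : x ⬝ᵥ x = 1) (hxq : x ⬝ᵥ signlessLaplacian G *ᵥ x = qspec G) :
    signlessLaplacian G *ᵥ x = qspec G • x := by
  classical
  exact (isHermitian_signlessLaplacian G).mulVec_eq_smul_of_dotProduct_mulVec_eq
    (le_sSup_spectrum _) hx hxq

end SignlessLaplacian

/-- Edge-rotation lemma: if `X` is the principal eigenvector of `Q(G)`,
`u₁u₂ ∈ E(G)`, `v₁v₂ ∉ E(G)`, `x_{v₁} + x_{v₂} ≥ x_{u₁} + x_{u₂}` and
`x_{v₁} + x_{v₂} > 0`, then `q(G − u₁u₂ + v₁v₂) > q(G)`. -/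
theorem qspec_edge_rotation {V : Type*} [Fintype V] (G : SimpleGraph V)
    (u1 u2 v1 v2 : V) (X : V → ℝ)
    (hX0 : ∀ v, 0 ≤ X v) (hXunit : ∑ v, X v ^ 2 = 1)
    (hXeig : (signlessLaplacian G).mulVec X = qspec G • X)
    (hu : G.Adj u1 u2) (hv : ¬ G.Adj v1 v2) (hv12 : v1 ≠ v2)
    (h1 : X u1 + X u2 ≤ X v1 + X v2) (h2 : 0 < X v1 + X v2) :
    qspec G <
      qspec (SimpleGraph.fromEdgeSet ((G.edgeSet \ {s(u1, u2)}) ∪ {s(v1, v2)})) := by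
  classical
  set H := fromEdgeSet ((G.edgeSet \ {s(u1, u2)}) ∪ {s(v1, v2)})
  have hXX : X ⬝ᵥ X = 1 := by simpa [dotProduct, sq] using hXunit
  have hHX : signlessLaplacian H *ᵥ X = qspec G • X + (X v1 + X v2) • incidenceVector s(v1, v2)
      - (X u1 + X u2) • incidenceVector s(u1, u2) := by
    rw [signlessLaplacian_fromEdgeSet_sdiff_union G hu hv (Sym2.mk_isDiag_iff.not.2 hv12),
      sub_mulVec, add_mulVec, hXeig, vecMulVec_self_mulVec, vecMulVec_self_mulVec,
      incidenceVector_mk_dotProduct hv12, incidenceVector_mk_dotProduct hu.ne]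
  have hquad : X ⬝ᵥ signlessLaplacian H *ᵥ X =
      qspec G + (X v1 + X v2) ^ 2 - (X u1 + X u2) ^ 2 := by
    rw [hHX, dotProduct_sub, dotProduct_add, dotProduct_smul, dotProduct_smul, dotProduct_smul,
      hXX, dotProduct_comm, incidenceVector_mk_dotProduct hv12, dotProduct_comm,
      incidenceVector_mk_dotProduct hu.ne]
    simp only [smul_eq_mul]
    ring
  have hsq : (X u1 + X u2) ^ 2 ≤ (X v1 + X v2) ^ 2 :=
    pow_le_pow_left₀ (add_nonneg (hX0 u1) (hX0 u2)) h1 2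
  have hle := dotProduct_signlessLaplacian_mulVec_le_qspec H hXX
  refine lt_of_le_of_ne (by linarith) fun heq => hv ?_
  have hHeig := signlessLaplacian_mulVec_eq_of_dotProduct_eq_qspec H hXX (by linarith)
  rw [hHX, ← heq, add_sub_assoc, add_eq_left, sub_eq_zero] at hHeig
  rw [← mem_edgeSet, ← eq_of_smul_incidenceVector_eq hv12 h2.ne' hHeig]
  exact hu
end

section
/- Let G be a graph and let G' be obtained from G by deleting two independent edges u1v1 and u2v2 (with all four vertices distinct) and adding the edges u1u2 and v1v2. If X is the principal eigenvector of Q(G), then q(G') − q(G) ≥ 2(x_{v2} − x_{u1})(x_{v1} − x_{u2}). In particular, if x_{v2} > x_{u1} and x_{v1} > x_{u2}, then q(G') > q(G). -/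
open Matrix SimpleGraph

/-!
Writing `Q(G) = B Bᵀ` with `B` the vertex–edge incidence matrix gives
`xᵀ Q(G) x = ∑_{uv ∈ E(G)} (x_u + x_v)²`. The switch changes this sum by
`(x_{u₁} + x_{u₂})² + (x_{v₁} + x_{v₂})² - (x_{u₁} + x_{v₁})² - (x_{u₂} + x_{v₂})²
  = 2 (x_{v₂} - x_{u₁}) (x_{v₁} - x_{u₂})`.
Since `Xᵀ Q(G) X = q(G)` and `Xᵀ Q(G') X ≤ q(G')` (Rayleigh), the claim follows.
-/

theorem Matrix.IsHermitian.dotProduct_mulVec_le_sSup_spectrum_mul {n : Type*} [Fintype n]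
    [DecidableEq n] {A : Matrix n n ℝ} (hA : A.IsHermitian) (x : n → ℝ) :
    x ⬝ᵥ A *ᵥ x ≤ sSup (spectrum ℝ A) * (x ⬝ᵥ x) := by
  set q := sSup (spectrum ℝ A)
  -- `σ(q - A) = q - σ(A)` lies in `[0, ∞)` because the finite set `σ(A)` is bounded by `q`.
  have hpsd : (algebraMap ℝ (Matrix n n ℝ) q - A).PosSemidef := by
    refine posSemidef_iff_isHermitian_and_spectrum_nonneg.2 ⟨(isHermitian_diagonal _).sub hA, ?_⟩
    rw [← spectrum.singleton_sub_eq]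
    rintro _ ⟨_, rfl, μ, hμ, rfl⟩
    exact sub_nonneg.2 (le_csSup A.finite_real_spectrum.bddAbove hμ)
  have hnonneg := hpsd.dotProduct_mulVec_nonneg x
  rw [Algebra.algebraMap_eq_smul_one, sub_mulVec, smul_mulVec, one_mulVec, dotProduct_sub,
    dotProduct_smul, smul_eq_mul, star_trivial] at hnonneg
  linarith

namespace SimpleGraph

theorem edgeSet_fromEdgeSet_sdiff_union {V : Type*} (G : SimpleGraph V) {s t : Set (Sym2 V)}
    (ht : ∀ e ∈ t, ¬ e.IsDiag) :
    (fromEdgeSet ((G.edgeSet \ s) ∪ t)).edgeSet = (G.edgeSet \ s) ∪ t := by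
  refine (edgeSet_fromEdgeSet _).trans (sdiff_eq_left.2 (Set.disjoint_left.2 ?_))
  rintro e (he | he)
  · exact G.not_isDiag_of_mem_edgeSet he.1
  · exact ht e he

variable {V R : Type*} [Fintype V] [DecidableEq V] [NonAssocSemiring R]
  (G : SimpleGraph V) [DecidableRel G.Adj] (x : V → R)

theorem vecMul_incMatrix_of_adj {u v : V} (h : G.Adj u v) :
    (x ᵥ* G.incMatrix R) s(u, v) = x u + x v := by
  have hends : (Finset.univ.filter fun a => a = u ∨ a = v) = {u, v} := by ext; simp
  simp only [vecMul, dotProduct, incMatrix_apply', mk'_mem_incidenceSet_iff, h, true_and,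
    mul_ite, mul_one, mul_zero]
  rw [← Finset.sum_filter, hends, Finset.sum_pair h.ne]

theorem vecMul_incMatrix_of_notMem_edgeSet {e : Sym2 V} (h : e ∉ G.edgeSet) :
    (x ᵥ* G.incMatrix R) e = 0 :=
  Finset.sum_eq_zero fun _ _ =>
    mul_eq_zero_of_right _ (G.incMatrix_of_notMem_incidenceSet fun he => h he.1)

end SimpleGraph

theorem Finset.sum_sdiff_union_add_sum {ι M : Type*} [DecidableEq ι] [AddCommMonoid M]
    {A s t : Finset ι} (hs : s ⊆ A) (ht : Disjoint t A) (f : ι → M) :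
    ∑ i ∈ (A \ s) ∪ t, f i + ∑ i ∈ s, f i = ∑ i ∈ A, f i + ∑ i ∈ t, f i := by
  rw [Finset.sum_union (ht.symm.mono_left Finset.sdiff_subset), add_right_comm,
    Finset.sum_sdiff hs]

section SignlessLaplacian

variable {V : Type*} [Fintype V]

theorem dotProduct_signlessLaplacian_mulVec_le_qspec_mul (G : SimpleGraph V) (x : V → ℝ) :
    x ⬝ᵥ signlessLaplacian G *ᵥ x ≤ qspec G * (x ⬝ᵥ x) := by
  classical
  exact (isHermitian_signlessLaplacian G).dotProduct_mulVec_le_sSup_spectrum_mul x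

theorem dotProduct_signlessLaplacian_mulVec_eq_sum_edgeFinset (G : SimpleGraph V)
    [Fintype G.edgeSet] (x : V → ℝ) :
    x ⬝ᵥ signlessLaplacian G *ᵥ x =
      ∑ e ∈ G.edgeFinset, Sym2.lift ⟨fun u v => (x u + x v) ^ 2, fun _ _ => by ring⟩ e := by
  classical
  rw [signlessLaplacian_eq_incMatrix_mul_transpose, ← mulVec_mulVec, dotProduct_mulVec,
    mulVec_transpose, dotProduct]
  rw [← Finset.sum_subset (Finset.subset_univ G.edgeFinset) fun e _ he => by
    rw [G.vecMul_incMatrix_of_notMem_edgeSet x (mt mem_edgeFinset.2 he), mul_zero]]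
  refine Finset.sum_congr rfl fun e he => ?_
  induction e using Sym2.ind with
  | h u v => rw [G.vecMul_incMatrix_of_adj x (mem_edgeFinset.1 he)]; exact (sq _).symm

theorem dotProduct_signlessLaplacian_mulVec_fromEdgeSet_switch (G : SimpleGraph V)
    {u1 v1 u2 v2 : V} (x : V → ℝ) (he1 : G.Adj u1 v1) (he2 : G.Adj u2 v2)
    (hd1 : u1 ≠ u2) (hd2 : u1 ≠ v2) (hd4 : v1 ≠ v2) (hn1 : ¬ G.Adj u1 u2) (hn2 : ¬ G.Adj v1 v2) :
    x ⬝ᵥ signlessLaplacian (fromEdgeSet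
        ((G.edgeSet \ {s(u1, v1), s(u2, v2)}) ∪ {s(u1, u2), s(v1, v2)})) *ᵥ x =
      x ⬝ᵥ signlessLaplacian G *ᵥ x + 2 * (x v2 - x u1) * (x v1 - x u2) := by
  classical
  have hedges : (fromEdgeSet
      ((G.edgeSet \ {s(u1, v1), s(u2, v2)}) ∪ {s(u1, u2), s(v1, v2)})).edgeFinset =
      (G.edgeFinset \ {s(u1, v1), s(u2, v2)}) ∪ {s(u1, u2), s(v1, v2)} := by
    rw [← Finset.coe_inj, coe_edgeFinset,
      G.edgeSet_fromEdgeSet_sdiff_union (by simpa using ⟨hd1, hd4⟩)]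
    push_cast
    rfl
  have hremoved : {s(u1, v1), s(u2, v2)} ⊆ G.edgeFinset := by
    simpa [Finset.insert_subset_iff] using ⟨he1, he2⟩
  have hadded : Disjoint {s(u1, u2), s(v1, v2)} G.edgeFinset := by
    simpa [Finset.disjoint_left] using ⟨hn1, hn2⟩
  have hswitch := Finset.sum_sdiff_union_add_sum hremoved hadded
    (Sym2.lift ⟨fun u v => (x u + x v) ^ 2, fun _ _ => by ring⟩)
  rw [Finset.sum_pair (by simp [hd1, hd2]), Finset.sum_pair (by simp [he1.ne, hd2]), ← hedges,
    ← dotProduct_signlessLaplacian_mulVec_eq_sum_edgeFinset,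
    ← dotProduct_signlessLaplacian_mulVec_eq_sum_edgeFinset] at hswitch
  simp only [Sym2.lift_mk] at hswitch
  linear_combination hswitch

end SignlessLaplacian

theorem qspec_two_edge_switch_general {V : Type*} [Fintype V] (G : SimpleGraph V)
    (u1 v1 u2 v2 : V) (X : V → ℝ)
    (hXunit : ∑ v, X v ^ 2 = 1)
    (hXeig : (signlessLaplacian G).mulVec X = qspec G • X)
    (he1 : G.Adj u1 v1) (he2 : G.Adj u2 v2)
    (hd1 : u1 ≠ u2) (hd2 : u1 ≠ v2) (hd4 : v1 ≠ v2)
    (hn1 : ¬ G.Adj u1 u2) (hn2 : ¬ G.Adj v1 v2) :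
    2 * (X v2 - X u1) * (X v1 - X u2) ≤
      qspec (SimpleGraph.fromEdgeSet
        ((G.edgeSet \ {s(u1, v1), s(u2, v2)}) ∪ {s(u1, u2), s(v1, v2)})) - qspec G ∧
    (X u1 < X v2 → X u2 < X v1 →
      qspec G < qspec (SimpleGraph.fromEdgeSet
        ((G.edgeSet \ {s(u1, v1), s(u2, v2)}) ∪ {s(u1, u2), s(v1, v2)}))) := by
  have hXX : X ⬝ᵥ X = 1 := by simpa [dotProduct, sq] using hXunit
  have hG : X ⬝ᵥ signlessLaplacian G *ᵥ X = qspec G := by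
    rw [hXeig, dotProduct_smul, hXX, smul_eq_mul, mul_one]
  have hG' := dotProduct_signlessLaplacian_mulVec_le_qspec_mul (fromEdgeSet
    ((G.edgeSet \ {s(u1, v1), s(u2, v2)}) ∪ {s(u1, u2), s(v1, v2)})) X
  rw [hXX, mul_one, dotProduct_signlessLaplacian_mulVec_fromEdgeSet_switch G X he1 he2 hd1 hd2
    hd4 hn1 hn2, hG] at hG'
  refine ⟨by linarith, fun h1 h2 => ?_⟩
  linarith [mul_pos (sub_pos.2 h1) (sub_pos.2 h2)]

/-- The two-edge switching lemma: deleting independent edges `u₁v₁, u₂v₂` and adding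
`u₁u₂, v₁v₂` changes the `Q`-spectral radius by at least
`2(x_{v₂} − x_{u₁})(x_{v₁} − x_{u₂})`. -/
theorem qspec_two_edge_switch {V : Type*} [Fintype V] (G : SimpleGraph V)
    (u1 v1 u2 v2 : V) (X : V → ℝ)
    (hX0 : ∀ v, 0 ≤ X v) (hXunit : ∑ v, X v ^ 2 = 1)
    (hXeig : (signlessLaplacian G).mulVec X = qspec G • X)
    (he1 : G.Adj u1 v1) (he2 : G.Adj u2 v2)
    (hd1 : u1 ≠ u2) (hd2 : u1 ≠ v2) (hd3 : v1 ≠ u2) (hd4 : v1 ≠ v2)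
    (hn1 : ¬ G.Adj u1 u2) (hn2 : ¬ G.Adj v1 v2) :
    2 * (X v2 - X u1) * (X v1 - X u2) ≤
      qspec (SimpleGraph.fromEdgeSet
        ((G.edgeSet \ {s(u1, v1), s(u2, v2)}) ∪ {s(u1, u2), s(v1, v2)})) - qspec G ∧
    (X u1 < X v2 → X u2 < X v1 →
      qspec G < qspec (SimpleGraph.fromEdgeSet
        ((G.edgeSet \ {s(u1, v1), s(u2, v2)}) ∪ {s(u1, u2), s(v1, v2)}))) :=
  qspec_two_edge_switch_general G u1 v1 u2 v2 X hXunit hXeig he1 he2 hd1 hd2 hd4 hn1 hn2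
end

section
/- Let S_{2,0,1} be the graph obtained from a central vertex by attaching 2 pendant edges and 1 pendant triangle (so it has 5 vertices and 5 edges). Then q(S_{2,0,1}) > 3 + √5. -/
/-!
The partition `{0}, {1, 2}, {3, 4}` of `S_{2,0,1}` is equitable, with quotient matrix
`!![4, 2, 2; 1, 1, 0; 1, 0, 3]`, whose characteristic polynomial is `c³ - 8c² + 15c - 4`.
Every root `c` of this cubic lifts to an eigenvector of `Q` that is constant on the three parts.
The cubic takes the value `1 - √5 < 0` at `3 + √5` and `14 > 0` at `6`, so it has a root
`c > 3 + √5`, and `q ≥ c`.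
-/

open Matrix SimpleGraph

theorem Matrix.mem_spectrum_of_mulVec_eq_smul {n K : Type*} [Fintype n] [DecidableEq n] [Field K]
    {A : Matrix n n K} {x : n → K} (hx : x ≠ 0) {c : K} (h : A *ᵥ x = c • x) :
    c ∈ spectrum K A := by
  rw [← Matrix.spectrum_toLin']
  exact (Module.End.hasEigenvalue_of_hasEigenvector
    ⟨Module.End.mem_eigenspace_iff.2 (by rwa [Matrix.toLin'_apply]), hx⟩).mem_spectrum

section SignlessLaplacian

variable {V : Type*} [Fintype V] (G : SimpleGraph V)

theorem signlessLaplacian_eq [DecidableEq V] [DecidableRel G.Adj] :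
    signlessLaplacian G = diagonal (fun v => (G.degree v : ℝ)) + G.adjMatrix ℝ := by
  unfold signlessLaplacian
  congr!

theorem signlessLaplacian_mulVec_apply [DecidableEq V] [DecidableRel G.Adj] (x : V → ℝ) (v : V) :
    (signlessLaplacian G *ᵥ x) v = ∑ w ∈ G.neighborFinset v, (x v + x w) := by
  rw [signlessLaplacian_eq, add_mulVec, Pi.add_apply, mulVec_diagonal, adjMatrix_mulVec_apply,
    Finset.sum_add_distrib, Finset.sum_const, card_neighborFinset_eq_degree, nsmul_eq_mul]

theorem le_qspec_of_mulVec_eq_smul {x : V → ℝ} (hx : x ≠ 0) {c : ℝ}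
    (h : signlessLaplacian G *ᵥ x = c • x) : c ≤ qspec G := by
  classical
  unfold qspec
  convert le_csSup (Matrix.finite_spectrum _).bddAbove (Matrix.mem_spectrum_of_mulVec_eq_smul hx h)

end SignlessLaplacian

def S201 : SimpleGraph (Fin 5) :=
  fromEdgeSet {s(0, 1), s(0, 2), s(0, 3), s(0, 4), s(3, 4)}

theorem S201_neighborFinset [DecidableRel S201.Adj] (v : Fin 5) :
    S201.neighborFinset v = ![{1, 2, 3, 4}, {0}, {0}, {0, 4}, {0, 3}] v := by
  ext w
  rw [mem_neighborFinset]
  fin_cases v <;> fin_cases w <;> simp [S201]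

def S201Eigenvector (c : ℝ) : Fin 5 → ℝ := ![(c - 1) * (c - 3), c - 3, c - 3, c - 1, c - 1]

theorem S201Eigenvector_ne_zero {c : ℝ} (hc : c ≠ 3) : S201Eigenvector c ≠ 0 :=
  Function.ne_iff.2 ⟨1, by simpa [S201Eigenvector, sub_eq_zero] using hc⟩

theorem S201_signlessLaplacian_mulVec {c : ℝ} (hc : c ^ 3 - 8 * c ^ 2 + 15 * c - 4 = 0) :
    signlessLaplacian S201 *ᵥ S201Eigenvector c = c • S201Eigenvector c := by
  classical
  ext v
  rw [signlessLaplacian_mulVec_apply, S201_neighborFinset]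
  fin_cases v <;>
    simp only [Fin.isValue, Fin.zero_eta, Fin.mk_one, Fin.reduceFinMk, cons_val_zero,
      cons_val_one, cons_val, S201Eigenvector, Finset.mem_insert, Finset.mem_singleton,
      Fin.reduceEq, or_self, not_false_eq_true, Finset.sum_insert, Finset.sum_singleton,
      Pi.smul_apply, smul_eq_mul]
  · linear_combination -hc
  all_goals ring

theorem exists_root_S201_cubic :
    ∃ c ∈ Set.Ioo (3 + √5) 6, c ^ 3 - 8 * c ^ 2 + 15 * c - 4 = 0 := by
  have h5 : √5 ^ 2 = 5 := Real.sq_sqrt (by norm_num)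
  have hlt : √5 < 3 := (Real.sqrt_lt' (by norm_num)).2 (by norm_num)
  have hgt : 1 < √5 := (Real.lt_sqrt (by norm_num)).2 (by norm_num)
  have hleft : (3 + √5) ^ 3 - 8 * (3 + √5) ^ 2 + 15 * (3 + √5) - 4 = 1 - √5 := by
    linear_combination (√5 + 1) * h5
  refine intermediate_value_Ioo (by linarith) (by fun_prop) ⟨?_, by norm_num⟩
  linarith

/-- `S_{2,0,1}`: center `0` with pendant edges to `1, 2` and a pendant triangle on
`3, 4`; its `Q`-spectral radius exceeds `3 + √5`. -/
theorem S201_qspec :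
    3 + Real.sqrt 5 <
      qspec (SimpleGraph.fromEdgeSet
        ({s((0 : Fin 5), 1), s(0, 2), s(0, 3), s(0, 4), s(3, 4)} :
          Set (Sym2 (Fin 5)))) := by
  obtain ⟨c, ⟨hlo, -⟩, hc⟩ := exists_root_S201_cubic
  have hx : S201Eigenvector c ≠ 0 := S201Eigenvector_ne_zero (by linarith [Real.sqrt_nonneg 5])
  exact hlo.trans_le (le_qspec_of_mulVec_eq_smul S201 hx (S201_signlessLaplacian_mulVec hc))
end
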